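/- arXiv:2501.05437 — 9 statements merged into one kernel-verified Lean document; each statement's English description precedes it below -/
import Mathlib

section
/- For positive differentiable functions x, y on an interval satisfying (xy²)' = x²/2 + y², the function g defined by g³ = xy² satisfies g' = (1/6)(x/y)^{4/3} + (1/3)(y/x)^{2/3}, and in particular g' ≥ 1/2, with equality if and only if x = y. -/
/-!
Writing `u = (x / y) ^ (2 / 3)`, the chain rule and the closure equation give
`g' = u ^ 2 / 6 + u⁻¹ / 3`. Then `g' - 1 / 2 = (u - 1) ^ 2 (u + 2) / (6 u)`, which is
nonnegative for `u > 0` and vanishes exactly at `u = 1`, i.e. at `x = y`.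
-/

namespace Real

lemma sq_div_six_add_inv_div_three_sub_half {u : ℝ} (hu : u ≠ 0) :
    u ^ 2 / 6 + u⁻¹ / 3 - 1 / 2 = (u - 1) ^ 2 * (u + 2) / (6 * u) := by
  field_simp
  ring

lemma half_le_sq_div_six_add_inv_div_three {u : ℝ} (hu : 0 < u) :
    1 / 2 ≤ u ^ 2 / 6 + u⁻¹ / 3 := by
  have h := sq_div_six_add_inv_div_three_sub_half hu.ne'
  have : 0 ≤ (u - 1) ^ 2 * (u + 2) / (6 * u) := by positivity
  linarith

lemma sq_div_six_add_inv_div_three_eq_half_iff {u : ℝ} (hu : 0 < u) :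
    u ^ 2 / 6 + u⁻¹ / 3 = 1 / 2 ↔ u = 1 := by
  rw [← sub_eq_zero, sq_div_six_add_inv_div_three_sub_half hu.ne']
  have : u + 2 ≠ 0 := by positivity
  simp [hu.ne', this, sub_eq_zero]

lemma rpow_two_thirds_eq_one_iff {r : ℝ} (hr : 0 ≤ r) : r ^ ((2 : ℝ) / 3) = 1 ↔ r = 1 := by
  conv_lhs => rw [← one_rpow ((2 : ℝ) / 3)]
  exact rpow_left_inj hr zero_le_one (by norm_num)

lemma sixth_mul_rpow_add_third_mul_inv_rpow {r : ℝ} (hr : 0 < r) :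
    1 / 6 * r ^ ((4 : ℝ) / 3) + 1 / 3 * r⁻¹ ^ ((2 : ℝ) / 3)
      = (r ^ ((2 : ℝ) / 3)) ^ 2 / 6 + (r ^ ((2 : ℝ) / 3))⁻¹ / 3 := by
  rw [← rpow_mul_natCast hr.le, inv_rpow hr.le]
  norm_num
  ring

lemma closure_deriv_cbrt_eq {a b : ℝ} (ha : 0 < a) (hb : 0 < b) :
    (a ^ 2 / 2 + b ^ 2) * (1 / 3) * (a * b ^ 2) ^ ((1 : ℝ) / 3 - 1)
      = 1 / 6 * (a / b) ^ ((4 : ℝ) / 3) + 1 / 3 * (b / a) ^ ((2 : ℝ) / 3) := by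
  have hr : 0 < a / b := by positivity
  rw [← inv_div a b, sixth_mul_rpow_add_third_mul_inv_rpow hr]
  set u := (a / b) ^ ((2 : ℝ) / 3) with hu
  have hu0 : 0 < u := by positivity
  have hcube : u ^ 3 = (a / b) ^ 2 := by
    rw [hu, ← rpow_mul_natCast hr.le]; norm_num
  have hpow : (a * b ^ 2) ^ ((1 : ℝ) / 3 - 1) = u⁻¹ * (b ^ 2)⁻¹ := by
    rw [show a * b ^ 2 = a / b * b ^ 3 by field_simp, mul_rpow hr.le (by positivity),
      ← rpow_natCast_mul hb.le, show (1 : ℝ) / 3 - 1 = -(2 / 3) by norm_num, rpow_neg hr.le,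
      show ((3 : ℕ) : ℝ) * -(2 / 3) = -(2 : ℕ) by norm_num, rpow_neg hb.le, rpow_natCast]
  rw [hpow]
  have : a ^ 2 = u ^ 3 * b ^ 2 := by rw [hcube]; field_simp
  rw [this]
  field_simp
  ring

end Real

open Real in
theorem stmt3_general (I : Set ℝ) (x y : ℝ → ℝ)
    (hx : ∀ t ∈ I, 0 < x t) (hy : ∀ t ∈ I, 0 < y t)
    (hclose : ∀ t ∈ I,
      HasDerivAt (fun s => x s * y s ^ 2) (x t ^ 2 / 2 + y t ^ 2) t) :
    ∀ t ∈ I,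
      HasDerivAt (fun s => (x s * y s ^ 2) ^ ((1 : ℝ) / 3))
        (1 / 6 * (x t / y t) ^ ((4 : ℝ) / 3)
          + 1 / 3 * (y t / x t) ^ ((2 : ℝ) / 3)) t ∧
      1 / 2 ≤ 1 / 6 * (x t / y t) ^ ((4 : ℝ) / 3)
          + 1 / 3 * (y t / x t) ^ ((2 : ℝ) / 3) ∧
      (1 / 6 * (x t / y t) ^ ((4 : ℝ) / 3)
          + 1 / 3 * (y t / x t) ^ ((2 : ℝ) / 3) = 1 / 2 ↔ x t = y t) := by
  intro t ht
  have hxt := hx t ht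
  have hyt := hy t ht
  have hr : 0 < x t / y t := by positivity
  have hval := sixth_mul_rpow_add_third_mul_inv_rpow hr
  rw [inv_div] at hval
  refine ⟨?_, ?_, ?_⟩
  · convert (hclose t ht).rpow_const (p := 1 / 3) (Or.inl (by positivity)) using 1
    exact (closure_deriv_cbrt_eq hxt hyt).symm
  · rw [hval]
    exact half_le_sq_div_six_add_inv_div_three (by positivity)
  · rw [hval, sq_div_six_add_inv_div_three_eq_half_iff (by positivity),
      rpow_two_thirds_eq_one_iff hr.le, div_eq_one_iff_eq hyt.ne']

theorem stmt3 (I : Set ℝ) (hI : IsOpen I) (x y : ℝ → ℝ)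
    (hx : ∀ t ∈ I, 0 < x t) (hy : ∀ t ∈ I, 0 < y t)
    (hclose : ∀ t ∈ I,
      HasDerivAt (fun s => x s * y s ^ 2) (x t ^ 2 / 2 + y t ^ 2) t) :
    ∀ t ∈ I,
      HasDerivAt (fun s => (x s * y s ^ 2) ^ ((1 : ℝ) / 3))
        (1 / 6 * (x t / y t) ^ ((4 : ℝ) / 3)
          + 1 / 3 * (y t / x t) ^ ((2 : ℝ) / 3)) t ∧
      1 / 2 ≤ 1 / 6 * (x t / y t) ^ ((4 : ℝ) / 3)
          + 1 / 3 * (y t / x t) ^ ((2 : ℝ) / 3) ∧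
      (1 / 6 * (x t / y t) ^ ((4 : ℝ) / 3)
          + 1 / 3 * (y t / x t) ^ ((2 : ℝ) / 3) = 1 / 2 ↔ x t = y t) :=
  stmt3_general I x y hx hy hclose
end

section
/- Along any solution of the Sp(2)-invariant soliton system, the adjusted torsion satisfies τ̃₁' = λx² and τ̃₂' = λy²; in particular, on an expander (λ > 0) both τ̃₁ and τ̃₂ are strictly increasing, so positivity of τ̃₁ (resp. τ̃₂) is preserved forward in time. -/
/-- The Sp(2)-invariant soliton first-order ODE system for `(x, y, τ₂)`
with dilation constant `lam`, on a set `I`. -/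
def sp2System (lam : ℝ) (x y τ : ℝ → ℝ) (I : Set ℝ) : Prop :=
  ∀ t ∈ I,
    HasDerivAt (fun s => x s ^ 2)
      (2 * x t - x t ^ 2 / y t ^ 2 * (x t + 2 * τ t)) t ∧
    HasDerivAt (fun s => y s ^ 2) (x t + τ t) t ∧
    HasDerivAt τ
      (4 * (lam * x t * y t ^ 2 - 3 * τ t) *
          (y t ^ 2 - x t ^ 2 - 3 / 2 * x t * τ t) /
        (3 * x t * (x t ^ 2 + 2 * y t ^ 2))) t

/-- `τ₁ := −(2x²/y²)·τ₂`. -/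
noncomputable def tau1V (x y τ : ℝ) : ℝ := -(2 * x ^ 2 / y ^ 2) * τ

/-- `u := (2(y²−x²)τ₂ − 2λxy⁴)/(y²(x²+2y²))`. -/
noncomputable def uV (lam x y τ : ℝ) : ℝ :=
  (2 * (y ^ 2 - x ^ 2) * τ - 2 * lam * x * y ^ 4) / (y ^ 2 * (x ^ 2 + 2 * y ^ 2))

/-- Adjusted torsion `τ̃₁ := τ₁ − u·x²`. -/
noncomputable def tt1V (lam x y τ : ℝ) : ℝ := tau1V x y τ - uV lam x y τ * x ^ 2

/-- Adjusted torsion `τ̃₂ := τ₂ − u·y²`. -/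
noncomputable def tt2V (lam x y τ : ℝ) : ℝ := τ - uV lam x y τ * y ^ 2

/-!
Clearing the denominators shows that the adjusted torsions are
`τ̃₁ = 2x²(λxy² − 3τ₂)/(x² + 2y²)` and `τ̃₂ = (3x²τ₂ + 2λxy⁴)/(x² + 2y²)`. Differentiating these
closed forms along the system, with `x' = (x²)'/(2x)`, everything cancels except `λx²` and
`λy²`; for `λ > 0` the mean value theorem then gives strict monotonicity.
-/

open Filter Topology

theorem HasDerivAt.of_sq {f : ℝ → ℝ} {f' t : ℝ} (h : HasDerivAt (fun s => f s ^ 2) f' t)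
    (hpos : ∀ᶠ s in 𝓝 t, 0 < f s) : HasDerivAt f (f' / (2 * f t)) t := by
  have ht : 0 < f t := hpos.self_of_nhds
  have hsqrt := h.sqrt (pow_ne_zero 2 ht.ne')
  rw [Real.sqrt_sq ht.le] at hsqrt
  exact hsqrt.congr_of_eventuallyEq (hpos.mono fun s hs => (Real.sqrt_sq hs.le).symm)

theorem strictMonoOn_of_hasDerivAt_pos {D : Set ℝ} (hDc : Convex ℝ D) (hDo : IsOpen D)
    {f f' : ℝ → ℝ} (hf : ∀ x ∈ D, HasDerivAt f (f' x) x) (hf' : ∀ x ∈ D, 0 < f' x) :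
    StrictMonoOn f D :=
  strictMonoOn_of_deriv_pos hDc (fun x hx => (hf x hx).continuousAt.continuousWithinAt)
    fun x hx => by
      rw [hDo.interior_eq] at hx
      rw [(hf x hx).deriv]
      exact hf' x hx

section AdjustedTorsion

variable {lam x y τ : ℝ}

theorem tt1V_eq_of_ne_zero (hy : y ≠ 0) :
    tt1V lam x y τ = 2 * x ^ 2 * (lam * x * y ^ 2 - 3 * τ) / (x ^ 2 + 2 * y ^ 2) := by
  have hD : x ^ 2 + 2 * y ^ 2 ≠ 0 := by positivity
  simp only [tt1V, tau1V, uV]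
  field_simp
  ring

theorem tt2V_eq_of_ne_zero (hy : y ≠ 0) :
    tt2V lam x y τ = (3 * x ^ 2 * τ + 2 * lam * x * y ^ 4) / (x ^ 2 + 2 * y ^ 2) := by
  have hD : x ^ 2 + 2 * y ^ 2 ≠ 0 := by positivity
  simp only [tt2V, uV]
  field_simp
  ring

end AdjustedTorsion

namespace sp2System

variable {lam : ℝ} {x y τ : ℝ → ℝ} {I : Set ℝ} {t : ℝ}

theorem hasDerivAt_x (hsys : sp2System lam x y τ I) (hIo : IsOpen I)
    (hx : ∀ t ∈ I, 0 < x t) (ht : t ∈ I) :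
    HasDerivAt x ((2 * x t - x t ^ 2 / y t ^ 2 * (x t + 2 * τ t)) / (2 * x t)) t :=
  (hsys t ht).1.of_sq (eventually_of_mem (hIo.mem_nhds ht) hx)

theorem hasDerivAt_tt1V (hsys : sp2System lam x y τ I) (hIo : IsOpen I)
    (hx : ∀ t ∈ I, 0 < x t) (hy : ∀ t ∈ I, 0 < y t) (ht : t ∈ I) :
    HasDerivAt (fun s => tt1V lam (x s) (y s) (τ s)) (lam * x t ^ 2) t := by
  obtain ⟨hX, hY, hτ⟩ := hsys t ht
  have hx' := hsys.hasDerivAt_x hIo hx ht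
  have hxt := (hx t ht).ne'
  have hyt := (hy t ht).ne'
  have hD : x t ^ 2 + 2 * y t ^ 2 ≠ 0 := by positivity
  have hclosed : (fun s => tt1V lam (x s) (y s) (τ s)) =ᶠ[𝓝 t]
      fun s => 2 * x s ^ 2 * (lam * x s * y s ^ 2 - 3 * τ s) / (x s ^ 2 + 2 * y s ^ 2) :=
    eventually_of_mem (hIo.mem_nhds ht) fun s hs => tt1V_eq_of_ne_zero (hy s hs).ne'
  refine HasDerivAt.congr_of_eventuallyEq ?_ hclosed
  refine ((hX.const_mul 2).mul ((hx'.const_mul lam).mul hY |>.sub (hτ.const_mul 3))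
    |>.div (hX.add (hY.const_mul 2)) hD).congr_deriv ?_
  simp only [Pi.add_apply, Pi.sub_apply, Pi.mul_apply]
  field_simp
  ring

theorem hasDerivAt_tt2V (hsys : sp2System lam x y τ I) (hIo : IsOpen I)
    (hx : ∀ t ∈ I, 0 < x t) (hy : ∀ t ∈ I, 0 < y t) (ht : t ∈ I) :
    HasDerivAt (fun s => tt2V lam (x s) (y s) (τ s)) (lam * y t ^ 2) t := by
  obtain ⟨hX, hY, hτ⟩ := hsys t ht
  have hx' := hsys.hasDerivAt_x hIo hx ht
  have hxt := (hx t ht).ne'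
  have hyt := (hy t ht).ne'
  have hD : x t ^ 2 + 2 * y t ^ 2 ≠ 0 := by positivity
  have hclosed : (fun s => tt2V lam (x s) (y s) (τ s)) =ᶠ[𝓝 t]
      fun s => (3 * x s ^ 2 * τ s + 2 * lam * x s * (y s ^ 2) ^ 2) / (x s ^ 2 + 2 * y s ^ 2) :=
    eventually_of_mem (hIo.mem_nhds ht) fun s hs => by
      dsimp only
      rw [tt2V_eq_of_ne_zero (hy s hs).ne']
      ring
  refine HasDerivAt.congr_of_eventuallyEq ?_ hclosed
  refine (((hX.const_mul 3).mul hτ).add ((hx'.const_mul (2 * lam)).mul (hY.pow 2))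
    |>.div (hX.add (hY.const_mul 2)) hD).congr_deriv ?_
  simp only [Pi.add_apply, Pi.mul_apply, Pi.pow_apply]
  field_simp
  ring

end sp2System

theorem stmt7 (lam : ℝ) (x y τ : ℝ → ℝ) (I : Set ℝ)
    (hIo : IsOpen I) (hIc : Convex ℝ I)
    (hx : ∀ t ∈ I, 0 < x t) (hy : ∀ t ∈ I, 0 < y t)
    (hsys : sp2System lam x y τ I) :
    (∀ t ∈ I,
      HasDerivAt (fun s => tt1V lam (x s) (y s) (τ s)) (lam * x t ^ 2) t ∧
      HasDerivAt (fun s => tt2V lam (x s) (y s) (τ s)) (lam * y t ^ 2) t) ∧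
    (0 < lam →
      StrictMonoOn (fun s => tt1V lam (x s) (y s) (τ s)) I ∧
      StrictMonoOn (fun s => tt2V lam (x s) (y s) (τ s)) I ∧
      (∀ s ∈ I, ∀ t ∈ I, s ≤ t →
        0 < tt1V lam (x s) (y s) (τ s) → 0 < tt1V lam (x t) (y t) (τ t)) ∧
      (∀ s ∈ I, ∀ t ∈ I, s ≤ t →
        0 < tt2V lam (x s) (y s) (τ s) → 0 < tt2V lam (x t) (y t) (τ t))) := by
  have h1 := fun t (ht : t ∈ I) => hsys.hasDerivAt_tt1V hIo hx hy ht
  have h2 := fun t (ht : t ∈ I) => hsys.hasDerivAt_tt2V hIo hx hy ht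
  refine ⟨fun t ht => ⟨h1 t ht, h2 t ht⟩, fun hlam => ?_⟩
  have mono1 := strictMonoOn_of_hasDerivAt_pos hIc hIo h1 fun t ht => by
    have := hx t ht
    positivity
  have mono2 := strictMonoOn_of_hasDerivAt_pos hIc hIo h2 fun t ht => by
    have := hy t ht
    positivity
  exact ⟨mono1, mono2, fun s hs t ht hst hpos => hpos.trans_le (mono1.monotoneOn hs ht hst),
    fun s hs t ht hst hpos => hpos.trans_le (mono2.monotoneOn hs ht hst)⟩
end

section
/- Along any solution of the Sp(2)-invariant soliton ODE system, S satisfies S' = (2xy²/(x² + 2y²))(α(y/x) − βS), where α(l) = (1/12)(l² − 1)(2 + l⁻²)² and β = λ + (x⁴ + 12x²y² − 4y⁴)/(4x²y⁴) + ((4y² − x²)S)/(3x²y⁴). -/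
/-- `S = y² − x² − (3/2)·x·τ₂`. -/
noncomputable def SV (x y τ : ℝ) : ℝ := y ^ 2 - x ^ 2 - 3 / 2 * x * τ

/-- `α(l) = (1/12)(l² − 1)(2 + l⁻²)²`. -/
noncomputable def alphaF (l : ℝ) : ℝ := 1 / 12 * (l ^ 2 - 1) * (2 + l⁻¹ ^ 2) ^ 2

/-!
Since `x > 0` on the open set `I`, `x = √(x²)` near each point, so `x'` is determined by `(x²)'`.
Then `S' = (y²)' − (x²)' − (3/2)(x'τ₂ + xτ₂')` is a rational function of `x, y, τ₂`, and the claimed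
form is a field identity.
-/

open Filter Topology

theorem HasDerivAt.of_sq_of_eventually_pos {f : ℝ → ℝ} {t d : ℝ}
    (hpos : ∀ᶠ s in 𝓝 t, 0 < f s) (h : HasDerivAt (fun s => f s ^ 2) d t) :
    HasDerivAt f (d / (2 * f t)) t := by
  have hft : 0 < f t := hpos.self_of_nhds
  have hsqrt : f =ᶠ[𝓝 t] fun s => Real.sqrt (f s ^ 2) :=
    hpos.mono fun s hs => (Real.sqrt_sq hs.le).symm
  have := (h.sqrt (pow_ne_zero 2 hft.ne')).congr_of_eventuallyEq hsqrt
  rwa [Real.sqrt_sq hft.le] at this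

theorem hasDerivAt_SV {x y τ : ℝ → ℝ} {t x' Y' τ' : ℝ} (hx : HasDerivAt x x' t)
    (hY : HasDerivAt (fun s => y s ^ 2) Y' t) (hτ : HasDerivAt τ τ' t) :
    HasDerivAt (fun s => SV (x s) (y s) (τ s))
      (Y' - 2 * x t * x' - 3 / 2 * (x' * τ t + x t * τ')) t := by
  have h : HasDerivAt (fun s => y s ^ 2 - x s ^ 2 - 3 / 2 * (x s * τ s))
      (Y' - 2 * x t * x' - 3 / 2 * (x' * τ t + x t * τ')) t := by
    simpa using (hY.fun_sub (hx.fun_pow 2)).fun_sub ((hx.fun_mul hτ).const_mul (3 / 2))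
  refine h.congr_of_eventuallyEq (Eventually.of_forall fun s => ?_)
  simp only [SV]
  ring

theorem sp2_SV_deriv_eq {lam x y τ : ℝ} (hx : x ≠ 0) (hy : y ≠ 0) :
    (x + τ) - 2 * x * ((2 * x - x ^ 2 / y ^ 2 * (x + 2 * τ)) / (2 * x))
        - 3 / 2 * ((2 * x - x ^ 2 / y ^ 2 * (x + 2 * τ)) / (2 * x) * τ
          + x * (4 * (lam * x * y ^ 2 - 3 * τ) * (y ^ 2 - x ^ 2 - 3 / 2 * x * τ) /
            (3 * x * (x ^ 2 + 2 * y ^ 2))))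
      = 2 * x * y ^ 2 / (x ^ 2 + 2 * y ^ 2) *
          (alphaF (y / x) -
            (lam + (x ^ 4 + 12 * x ^ 2 * y ^ 2 - 4 * y ^ 4) / (4 * x ^ 2 * y ^ 4)
              + (4 * y ^ 2 - x ^ 2) * SV x y τ / (3 * x ^ 2 * y ^ 4)) * SV x y τ) := by
  have hden : x ^ 2 + 2 * y ^ 2 ≠ 0 := by positivity
  simp only [SV, alphaF, inv_div]
  field_simp
  ring

theorem stmt8 (lam : ℝ) (x y τ : ℝ → ℝ) (I : Set ℝ) (hIo : IsOpen I)
    (hx : ∀ t ∈ I, 0 < x t) (hy : ∀ t ∈ I, 0 < y t)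
    (hsys : sp2System lam x y τ I) :
    ∀ t ∈ I,
      HasDerivAt (fun s => SV (x s) (y s) (τ s))
        (2 * x t * y t ^ 2 / (x t ^ 2 + 2 * y t ^ 2) *
          (alphaF (y t / x t) -
            (lam + (x t ^ 4 + 12 * x t ^ 2 * y t ^ 2 - 4 * y t ^ 4) /
                (4 * x t ^ 2 * y t ^ 4)
              + (4 * y t ^ 2 - x t ^ 2) * SV (x t) (y t) (τ t) /
                (3 * x t ^ 2 * y t ^ 4)) *
            SV (x t) (y t) (τ t))) t := by
  intro t ht
  obtain ⟨hx2, hy2, hτ⟩ := hsys t ht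
  have hxpos : ∀ᶠ s in 𝓝 t, 0 < x s :=
    eventually_of_mem (hIo.mem_nhds ht) hx
  rw [← sp2_SV_deriv_eq (hx t ht).ne' (hy t ht).ne']
  exact hasDerivAt_SV (hx2.of_sq_of_eventually_pos hxpos) hy2 hτ
end

section
/- Let x, y, S satisfy the closure system x' = ((x²+2y²)+4S)/(6y²), y' = ((x²+2y²)−2S)/(6xy) together with M = 3x + τ̃₁ and M' = ((y² + x²/2)/(xy²))M − 3x²/y². Then 3x'' = ((xy²)'·M)/(x·xy²) + ((1/y² − 1/x²)M − 9x/y² − 2λx)x'. In particular, at any critical point of x, x'' has the same sign as M. -/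
/-!
Since `M' = 3x' + λx²`, the relation for `M'` reads `3x' = q M - 3x²/y² - λx²` on `I`, with
`q = (y² + x²/2)/(xy²)`, so `x''` comes from differentiating the right-hand side and feeding
`M'` back in. The closure system is needed only through `(xy²)' = y² + x²/2`,
i.e. `q = (xy²)'/(xy²)`, whence `q' = (y² + x²/2)'/(xy²) - q²`. At a critical point of `x`
all `x'`-terms drop out and `3x'' = (x²/2 + y²) M / (x²y²)`, whose coefficient of `M` is positive.
-/

open Filter Topology

theorem xy_sq_deriv_of_closure {X Y S X' Y' : ℝ} (hX : X ≠ 0) (hY : Y ≠ 0)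
    (hX' : X' = ((X ^ 2 + 2 * Y ^ 2) + 4 * S) / (6 * Y ^ 2))
    (hY' : Y' = ((X ^ 2 + 2 * Y ^ 2) - 2 * S) / (6 * X * Y)) :
    X' * Y ^ 2 + X * (2 * Y * Y') = Y ^ 2 + X ^ 2 / 2 := by
  subst hX' hY'
  field_simp
  ring

theorem hasDerivAt_closure_rhs {x y τ : ℝ → ℝ} {x' y' t : ℝ} (lam : ℝ)
    (hx : HasDerivAt x x' t) (hy : HasDerivAt y y' t) (hτ : HasDerivAt τ (lam * x t ^ 2) t)
    (hx0 : x t ≠ 0) (hy0 : y t ≠ 0)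
    (hxy : x' * y t ^ 2 + x t * (2 * y t * y') = y t ^ 2 + x t ^ 2 / 2)
    (hM : 3 * x' + lam * x t ^ 2
      = (y t ^ 2 + x t ^ 2 / 2) / (x t * y t ^ 2) * (3 * x t + τ t) - 3 * x t ^ 2 / y t ^ 2) :
    HasDerivAt (fun s => ((y s ^ 2 + x s ^ 2 / 2) / (x s * y s ^ 2) * (3 * x s + τ s)
        - 3 * x s ^ 2 / y s ^ 2 - lam * x s ^ 2) / 3)
      (1 / 3 * ((x t ^ 2 / 2 + y t ^ 2) * (3 * x t + τ t) / (x t * (x t * y t ^ 2))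
        + ((1 / y t ^ 2 - 1 / x t ^ 2) * (3 * x t + τ t)
            - 9 * x t / y t ^ 2 - 2 * lam * x t) * x')) t := by
  have hx2 : HasDerivAt (fun s => x s ^ 2) (2 * x t * x') t := by
    simpa [mul_comm] using hx.fun_pow 2
  have hy2 : HasDerivAt (fun s => y s ^ 2) (2 * y t * y') t := by
    simpa [mul_comm] using hy.fun_pow 2
  have hq := (hy2.add (hx2.div_const 2)).div (hx.mul hy2) (mul_ne_zero hx0 (pow_ne_zero 2 hy0))
  have hMd := (hx.const_mul 3).add hτ
  have hrhs := (((hq.mul hMd).sub ((hx2.const_mul 3).div hy2 (pow_ne_zero 2 hy0))).sub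
    (hx2.const_mul lam)).div_const 3
  have hx' : x' = (y t ^ 2 + x t ^ 2 / 2 - x t * (2 * y t * y')) / y t ^ 2 := by
    field_simp
    linarith
  refine hrhs.congr_deriv ?_
  simp only [Pi.add_apply, Pi.mul_apply, Pi.div_apply]
  rw [hM, hx']
  field_simp
  ring

theorem stmt11 (lam : ℝ) (x y S tt1 xd yd : ℝ → ℝ) (I : Set ℝ) (hIo : IsOpen I)
    (hx : ∀ t ∈ I, 0 < x t) (hy : ∀ t ∈ I, 0 < y t)
    (hdx : ∀ t ∈ I, HasDerivAt x (xd t) t)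
    (hdy : ∀ t ∈ I, HasDerivAt y (yd t) t)
    (hxd : ∀ t ∈ I,
      xd t = ((x t ^ 2 + 2 * y t ^ 2) + 4 * S t) / (6 * y t ^ 2))
    (hyd : ∀ t ∈ I,
      yd t = ((x t ^ 2 + 2 * y t ^ 2) - 2 * S t) / (6 * x t * y t))
    (htt1 : ∀ t ∈ I, HasDerivAt tt1 (lam * x t ^ 2) t)
    (hM : ∀ t ∈ I,
      3 * xd t + lam * x t ^ 2
        = (y t ^ 2 + x t ^ 2 / 2) / (x t * y t ^ 2) * (3 * x t + tt1 t)
          - 3 * x t ^ 2 / y t ^ 2) :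
    ∀ t ∈ I,
      HasDerivAt xd
        (1 / 3 * ((x t ^ 2 / 2 + y t ^ 2) * (3 * x t + tt1 t) /
            (x t * (x t * y t ^ 2))
          + ((1 / y t ^ 2 - 1 / x t ^ 2) * (3 * x t + tt1 t)
              - 9 * x t / y t ^ 2 - 2 * lam * x t) * xd t)) t ∧
      (xd t = 0 →
        (0 < 3 * x t + tt1 t →
          0 < 1 / 3 * ((x t ^ 2 / 2 + y t ^ 2) * (3 * x t + tt1 t) /
              (x t * (x t * y t ^ 2))
            + ((1 / y t ^ 2 - 1 / x t ^ 2) * (3 * x t + tt1 t)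
                - 9 * x t / y t ^ 2 - 2 * lam * x t) * xd t)) ∧
        (3 * x t + tt1 t < 0 →
          1 / 3 * ((x t ^ 2 / 2 + y t ^ 2) * (3 * x t + tt1 t) /
              (x t * (x t * y t ^ 2))
            + ((1 / y t ^ 2 - 1 / x t ^ 2) * (3 * x t + tt1 t)
                - 9 * x t / y t ^ 2 - 2 * lam * x t) * xd t) < 0)) := by
  intro t ht
  have hxt := hx t ht
  have hyt := hy t ht
  have hxd_eq : xd =ᶠ[𝓝 t] fun s =>
      ((y s ^ 2 + x s ^ 2 / 2) / (x s * y s ^ 2) * (3 * x s + tt1 s)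
        - 3 * x s ^ 2 / y s ^ 2 - lam * x s ^ 2) / 3 := by
    filter_upwards [hIo.mem_nhds ht] with s hs
    linarith [hM s hs]
  have hxy := xy_sq_deriv_of_closure hxt.ne' hyt.ne' (hxd t ht) (hyd t ht)
  refine ⟨(hasDerivAt_closure_rhs lam (hdx t ht) (hdy t ht) (htt1 t ht) hxt.ne' hyt.ne' hxy
    (hM t ht)).congr_of_eventuallyEq hxd_eq, fun hcrit => ?_⟩
  have hweight : 0 < (x t ^ 2 / 2 + y t ^ 2) / (x t * (x t * y t ^ 2)) := by positivity
  rw [hcrit, mul_zero, add_zero, mul_div_right_comm]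
  exact ⟨fun hMt => mul_pos (by norm_num) (mul_pos hweight hMt),
    fun hMt => mul_neg_of_pos_of_neg (by norm_num) (mul_neg_of_pos_of_neg hweight hMt)⟩
end

section
/- For λ < 0, the planar system α' = −2λβ(α + 2/3) + α(1 + 2α)/(2β), β' = 2(α + 3/4) on {β > 0} has a unique fixed point, located at (α, β) = (−3/4, √(−9/(8λ))), and the linearisation there has eigenvalues (5√(−2λ) ± √(46λ))/12, a complex conjugate pair with positive real part. -/
/-!
The β-equation forces α = -3/4, after which the α-equation reads λβ² = -9/8.
For the eigenvalues: every w ∈ ℂ and its conjugate are roots of z² - 2 (Re w) z + |w|², and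
the Jacobian at the fixed point has trace 2 · 5√(-2λ)/12 and determinant
-2λ/3 = (5√(-2λ)/12)² + (√(-46λ)/12)².
-/

open Matrix

open ComplexConjugate in
theorem Complex.sq_sub_two_re_mul_add_normSq (z : ℂ) :
    z ^ 2 - 2 * z.re * z + normSq z = 0 := by
  have htrace : (2 * z.re : ℂ) = z + conj z := by rw [add_conj]; push_cast; rfl
  rw [htrace, ← mul_conj]
  ring

theorem Matrix.det_smul_one_sub_fin_two {R : Type*} [CommRing R] (z a b c d : R) :
    det (z • (1 : Matrix (Fin 2) (Fin 2) R) - !![a, b; c, d]) =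
      z ^ 2 - (a + d) * z + (a * d - b * c) := by
  simp [det_fin_two]
  ring

theorem Matrix.det_smul_one_sub_fin_two_eq_zero {a b c d : ℂ} (z : ℂ)
    (htrace : a + d = 2 * z.re) (hdet : a * d - b * c = Complex.normSq z) :
    det (z • (1 : Matrix (Fin 2) (Fin 2) ℂ) - !![a, b; c, d]) = 0 := by
  rw [det_smul_one_sub_fin_two, htrace, hdet, Complex.sq_sub_two_re_mul_add_normSq]

theorem shrinkerSystem_fixedPoint_iff {lam α β : ℝ} (hlam : lam ≠ 0) (hβ : 0 < β) :
    (-2 * lam * β * (α + 2 / 3) + α * (1 + 2 * α) / (2 * β) = 0 ∧ 2 * (α + 3 / 4) = 0) ↔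
      (α = -3 / 4 ∧ β = Real.sqrt (-9 / (8 * lam))) := by
  have hα : 2 * (α + 3 / 4) = 0 ↔ α = -3 / 4 := by constructor <;> intro h <;> linarith
  rw [and_comm, hα, eq_comm (a := β), Real.sqrt_eq_iff_mul_self_eq_of_pos hβ]
  refine and_congr_right fun hα => ?_
  subst hα
  rw [eq_div_iff (by positivity)]
  field_simp
  constructor <;> intro h <;> linarith

theorem stmt15 (lam : ℝ) (hlam : lam < 0) :
    (∀ α β : ℝ, 0 < β →
      ((-2 * lam * β * (α + 2 / 3) + α * (1 + 2 * α) / (2 * β) = 0 ∧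
          2 * (α + 3 / 4) = 0) ↔
        (α = -3 / 4 ∧ β = Real.sqrt (-9 / (8 * lam))))) ∧
    (∀ z : ℂ,
      (z = (5 * Real.sqrt (-2 * lam) : ℝ) / 12
            + ((Real.sqrt (-46 * lam) : ℝ) / 12) * Complex.I ∨
       z = (5 * Real.sqrt (-2 * lam) : ℝ) / 12
            - ((Real.sqrt (-46 * lam) : ℝ) / 12) * Complex.I) →
      Matrix.det (z • (1 : Matrix (Fin 2) (Fin 2) ℂ) -
        !![((5 / 6 * Real.sqrt (-2 * lam) : ℝ) : ℂ), ((lam / 3 : ℝ) : ℂ);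
           (2 : ℂ), (0 : ℂ)]) = 0) ∧
    (0 < (5 * Real.sqrt (-2 * lam)) / 12 ∧ 0 < Real.sqrt (-46 * lam) / 12 ∧
      (starRingEnd ℂ)
          ((5 * Real.sqrt (-2 * lam) : ℝ) / 12
            + ((Real.sqrt (-46 * lam) : ℝ) / 12) * Complex.I)
        = (5 * Real.sqrt (-2 * lam) : ℝ) / 12
            - ((Real.sqrt (-46 * lam) : ℝ) / 12) * Complex.I) := by
  have hs := Real.sq_sqrt (by linarith : 0 ≤ -2 * lam)
  have ht := Real.sq_sqrt (by linarith : 0 ≤ -46 * lam)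
  have hspos := Real.sqrt_pos.2 (by linarith : 0 < -2 * lam)
  have htpos := Real.sqrt_pos.2 (by linarith : 0 < -46 * lam)
  set s := √(-2 * lam)
  set t := √(-46 * lam)
  refine ⟨fun α β hβ => shrinkerSystem_fixedPoint_iff hlam.ne hβ, fun z hz => ?_,
    by positivity, by positivity, ?_⟩
  · obtain ⟨hre, hnormSq⟩ : z.re = 5 * s / 12 ∧ Complex.normSq z = -2 * lam / 3 := by
      rcases hz with rfl | rfl <;> simp [Complex.normSq_apply] <;>
        linear_combination (25 * hs + ht) / 144
    apply det_smul_one_sub_fin_two_eq_zero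
    · rw [hre]; push_cast; ring
    · rw [hnormSq]; push_cast; ring
  · simp only [map_add, map_mul, map_div₀, map_ofNat, Complex.conj_ofReal, Complex.conj_I]
    ring
end

section
/- For λ < 0 and any solution (α, β) of the planar system α' = −2λβ(α + 2/3) + α(1 + 2α)/(2β), β' = 2(α + 3/4), if β < β* := √(−9/(8λ)) and −3/4 < α < −21/32, then (8β*α − 5β)' > 0. -/
/-!
Since `λ = -9/(8β*²)`, for fixed `α < -21/32` the right-hand side of the `α`-equation
is strictly decreasing in `β` on `(0, β*]`, so below `β*` it exceeds its value at `β*`, which is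
`(α + 2)(α + 3/4)/β*`. Hence `(8β*α - 5β)' > 8(α + 2)(α + 3/4) - 10(α + 3/4) = 8(α + 3/4)² ≥ 0`.
-/

/-- `α' = alphaRhs λ α β` in the shrinker system. -/
noncomputable def alphaRhs (lam a b : ℝ) : ℝ :=
  -2 * lam * b * (a + 2 / 3) + a * (1 + 2 * a) / (2 * b)

lemma alphaRhs_eq_div_of_lam_eq {lam a B : ℝ} (hB : B ≠ 0) (hlamB : lam = -9 / (8 * B ^ 2)) :
    alphaRhs lam a B = (a + 2) * (a + 3 / 4) / B := by
  subst hlamB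
  unfold alphaRhs
  field_simp
  ring

lemma alphaRhs_lt_of_lt {lam a b B : ℝ} (hlamB : lam = -9 / (8 * B ^ 2))
    (hb : 0 < b) (hbB : b < B) (ha : a < -21 / 32) :
    alphaRhs lam a B < alphaRhs lam a b := by
  have hB : 0 < B := hb.trans hbB
  -- the smaller root of `4a² - 7a - 6` is `(7 - √145)/8 ≈ -0.630 > -21/32`
  have hq : 0 < 4 * a ^ 2 - 7 * a - 6 := by nlinarith
  have hp : 0 < a * (1 + 2 * a) := mul_pos_of_neg_of_neg (by linarith) (by linarith)
  have hdiff : alphaRhs lam a b - alphaRhs lam a B =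
      (B - b) * ((4 * a ^ 2 - 7 * a - 6) / (4 * B ^ 2)
        + a * (1 + 2 * a) * (B - b) / (2 * b * B ^ 2)) := by
    subst hlamB
    unfold alphaRhs
    field_simp
    ring
  have : 0 < alphaRhs lam a b - alphaRhs lam a B := by
    rw [hdiff]
    have : 0 < B - b := sub_pos.mpr hbB
    positivity
  linarith

lemma eight_mul_alphaRhs_sub_pos {lam a b B : ℝ} (hlamB : lam = -9 / (8 * B ^ 2))
    (hb : 0 < b) (hbB : b < B) (ha : a < -21 / 32) :
    0 < 8 * B * alphaRhs lam a b - 5 * (2 * (a + 3 / 4)) := by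
  have hB : 0 < B := hb.trans hbB
  calc 0 ≤ 8 * (a + 3 / 4) ^ 2 := by positivity
    _ = 8 * B * alphaRhs lam a B - 5 * (2 * (a + 3 / 4)) := by
      rw [alphaRhs_eq_div_of_lam_eq hB.ne' hlamB]
      field_simp
      ring
    _ < 8 * B * alphaRhs lam a b - 5 * (2 * (a + 3 / 4)) := by
      gcongr
      exact alphaRhs_lt_of_lt hlamB hb hbB ha

theorem stmt16_general (lam βstar : ℝ) (hlam : lam < 0)
    (hβstar : βstar = Real.sqrt (-9 / (8 * lam)))
    (α β : ℝ → ℝ) (t : ℝ) (hβpos : 0 < β t)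
    (hα : HasDerivAt α
      (-2 * lam * β t * (α t + 2 / 3) + α t * (1 + 2 * α t) / (2 * β t)) t)
    (hβ : HasDerivAt β (2 * (α t + 3 / 4)) t)
    (h1 : β t < βstar) (h3 : α t < -21 / 32) :
    HasDerivAt (fun s => 8 * βstar * α s - 5 * β s)
      (8 * βstar *
          (-2 * lam * β t * (α t + 2 / 3) + α t * (1 + 2 * α t) / (2 * β t))
        - 5 * (2 * (α t + 3 / 4))) t ∧
    0 < 8 * βstar *
          (-2 * lam * β t * (α t + 2 / 3) + α t * (1 + 2 * α t) / (2 * β t))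
        - 5 * (2 * (α t + 3 / 4)) := by
  have hlamB : lam = -9 / (8 * βstar ^ 2) := by
    rw [hβstar, Real.sq_sqrt (div_nonneg_of_nonpos (by norm_num) (by linarith))]
    field_simp
  exact ⟨(hα.const_mul (8 * βstar)).sub (hβ.const_mul 5),
    eight_mul_alphaRhs_sub_pos hlamB hβpos h1 h3⟩

theorem stmt16 (lam βstar : ℝ) (hlam : lam < 0)
    (hβstar : βstar = Real.sqrt (-9 / (8 * lam)))
    (α β : ℝ → ℝ) (t : ℝ) (hβpos : 0 < β t)
    (hα : HasDerivAt α
      (-2 * lam * β t * (α t + 2 / 3) + α t * (1 + 2 * α t) / (2 * β t)) t)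
    (hβ : HasDerivAt β (2 * (α t + 3 / 4)) t)
    (h1 : β t < βstar) (h2 : -3 / 4 < α t) (h3 : α t < -21 / 32) :
    HasDerivAt (fun s => 8 * βstar * α s - 5 * β s)
      (8 * βstar *
          (-2 * lam * β t * (α t + 2 / 3) + α t * (1 + 2 * α t) / (2 * β t))
        - 5 * (2 * (α t + 3 / 4))) t ∧
    0 < 8 * βstar *
          (-2 * lam * β t * (α t + 2 / 3) + α t * (1 + 2 * α t) / (2 * β t))
        - 5 * (2 * (α t + 3 / 4)) :=
  stmt16_general lam βstar hlam hβstar α β t hβpos hα hβ h1 h3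
end

section
/- For λ < 0, the vector field V(α, β) = (−2λβ(α + 2/3) + α(1 + 2α)/(2β), 2(α + 3/4)) on {β > 0} has divergence div V = (1 + 4α − 4λβ²)/(2β); consequently div V > 0 whenever α ≥ −1 and −λβ² > 4/5, and hence any simply connected region contained in that set contains no nontrivial closed orbits of V. -/
/-!
With `B = β* = √(-9/(8λ))`, the function `shrinkerLyapunov λ B` is a Lyapunov function for `V`
on the region `β > 0, α ≥ -1, -λβ² > 4/5`: along trajectories its derivative is
`(48 (α + 3/4)² F + (-8λ) (β - B)² (β + B)) / (48 β)` with `F = shrinkerFactor λ B > 0` there,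
so it is nondecreasing and stationary only at the equilibrium `(-3/4, B)`. On a periodic
trajectory it is periodic and monotone, hence constant, so the trajectory is that equilibrium.
-/

open Real

section

variable {𝕜 E F : Type*} [NontriviallyNormedField 𝕜] [NormedAddCommGroup E] [NormedSpace 𝕜 E]
  [NormedAddCommGroup F] [NormedSpace 𝕜 F] {f : 𝕜 → E × F} {f' : E × F} {x : 𝕜}

theorem HasDerivAt.fst (h : HasDerivAt f f' x) : HasDerivAt (fun u => (f u).1) f'.1 x := by
  simpa using h.hasFDerivAt.fst.hasDerivAt

theorem HasDerivAt.snd (h : HasDerivAt f f' x) : HasDerivAt (fun u => (f u).2) f'.2 x := by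
  simpa using h.hasFDerivAt.snd.hasDerivAt

end

theorem Function.Periodic.eq_of_monotone {α : Type*} [PartialOrder α] {f : ℝ → α} {T : ℝ}
    (hf : Function.Periodic f T) (hT : 0 < T) (hmono : Monotone f) (u v : ℝ) : f u = f v := by
  wlog huv : u ≤ v generalizing u v
  · exact (this v u (le_of_not_ge huv)).symm
  obtain ⟨n, hn⟩ := exists_nat_ge ((v - u) / T)
  have hv : v ≤ u + n * T := by linarith [(div_le_iff₀ hT).mp hn]
  exact le_antisymm (hmono huv) (by simpa only [(hf.nat_mul n) u] using hmono hv)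

theorem Function.Periodic.hasDerivAt_eq_zero_of_nonneg {f f' : ℝ → ℝ} {T : ℝ}
    (hf : Function.Periodic f T) (hT : 0 < T) (hd : ∀ x, HasDerivAt f (f' x) x)
    (hnn : ∀ x, 0 ≤ f' x) (x : ℝ) : f' x = 0 := by
  have hconst : f = fun _ => f 0 :=
    funext fun y => hf.eq_of_monotone hT (monotone_of_hasDerivAt_nonneg hd hnn) y 0
  have hx := hd x
  rw [hconst] at hx
  exact hx.unique (hasDerivAt_const x _)

noncomputable section

def shrinkerField (lam : ℝ) (p : ℝ × ℝ) : ℝ × ℝ :=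
  (-2 * lam * p.2 * (p.1 + 2 / 3) + p.1 * (1 + 2 * p.1) / (2 * p.2), 2 * (p.1 + 3 / 4))

def shrinkerLyapunov (lam B : ℝ) (p : ℝ × ℝ) : ℝ :=
  5 * B / 2 * (p.1 + 3 / 4) ^ 2 - (p.2 - B) * (p.1 + 3 / 4) - lam / 3 * p.2 ^ 3
    + 7 / 24 * lam * B * p.2 ^ 2 - p.2 / 2 + B / 32 * log p.2

def shrinkerFactor (lam B : ℝ) (p : ℝ × ℝ) : ℝ :=
  5 * B * (p.1 + 3 / 4) - 10 * lam * B * p.2 ^ 2 - 4 * B - 3 * p.2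

def shrinkerLyapunovRate (lam B : ℝ) (p : ℝ × ℝ) : ℝ :=
  (48 * (p.1 + 3 / 4) ^ 2 * shrinkerFactor lam B p + (p.2 - B) * (-8 * lam * p.2 ^ 2 - 9))
    / (48 * p.2)

end

theorem hasDerivAt_shrinkerLyapunov_comp (lam B : ℝ) {γ : ℝ → ℝ × ℝ} {t : ℝ}
    (hpos : (γ t).2 ≠ 0) (hγ : HasDerivAt γ (shrinkerField lam (γ t)) t) :
    HasDerivAt (fun u => shrinkerLyapunov lam B (γ u)) (shrinkerLyapunovRate lam B (γ t)) t := by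
  have hx := hγ.fst.add_const (3 / 4)
  have hy := hγ.snd
  have hL := (((((hx.pow 2).const_mul (5 * B / 2)).sub ((hy.sub_const B).mul hx)).sub
    ((hy.pow 3).const_mul (lam / 3))).add ((hy.pow 2).const_mul (7 / 24 * lam * B))).sub
    (hy.div_const 2) |>.add ((hy.log hpos).const_mul (B / 32))
  refine hL.congr_deriv ?_
  simp only [shrinkerLyapunovRate, shrinkerFactor, shrinkerField]
  field_simp
  ring

theorem shrinkerField_divergence (lam a b : ℝ) (hb : 0 < b) :
    deriv (fun a' => -2 * lam * b * (a' + 2 / 3) + a' * (1 + 2 * a') / (2 * b)) a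
        + deriv (fun _b' => (2 * (a + 3 / 4) : ℝ)) b
      = (1 + 4 * a - 4 * lam * b ^ 2) / (2 * b) := by
  have h : HasDerivAt (fun a' => -2 * lam * b * (a' + 2 / 3) + a' * (1 + 2 * a') / (2 * b))
      (-2 * lam * b + (1 + 4 * a) / (2 * b)) a := by
    refine (((hasDerivAt_id a).add_const (2 / 3)).const_mul (-2 * lam * b)).add
      (((hasDerivAt_id a).mul (((hasDerivAt_id a).const_mul 2).const_add 1)).div_const (2 * b))
      |>.congr_deriv ?_
    simp only [id]
    ring
  rw [h.deriv, deriv_const]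
  field_simp
  ring

theorem shrinkerField_divergence_pos (lam a b : ℝ) (hb : 0 < b) (ha : -1 ≤ a)
    (hreg : 4 / 5 < -lam * b ^ 2) : 0 < (1 + 4 * a - 4 * lam * b ^ 2) / (2 * b) :=
  div_pos (by linarith) (by linarith)

theorem shrinkerFactor_pos {lam B : ℝ} {p : ℝ × ℝ} (hB : 0 < B) (hB2 : -8 * lam * B ^ 2 = 9)
    (hx : -1 ≤ p.1) (hreg : 4 / 5 < -lam * p.2 ^ 2) : 0 < shrinkerFactor lam B p := by
  obtain ⟨x, y⟩ := p
  have hy2 : 32 * B ^ 2 < 45 * y ^ 2 := by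
    have := mul_lt_mul_of_pos_left hreg (by positivity : (0 : ℝ) < 8 * B ^ 2)
    linear_combination (5 : ℝ) * this + 5 * y ^ 2 * hB2
  have hquad : 0 < 45 * y ^ 2 - 12 * y * B - 21 * B ^ 2 := by nlinarith [sq_nonneg (3 * y - 2 * B)]
  have hscale : 4 * B * (-10 * lam * B * y ^ 2) = 45 * y ^ 2 := by
    linear_combination 5 * y ^ 2 * hB2
  have : 0 < 4 * B * shrinkerFactor lam B (x, y) := by rw [shrinkerFactor]; nlinarith
  exact pos_of_mul_pos_right this (by positivity)

theorem shrinkerLyapunovRate_eq {lam B : ℝ} (hB2 : -8 * lam * B ^ 2 = 9) (p : ℝ × ℝ) :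
    shrinkerLyapunovRate lam B p =
      (48 * (p.1 + 3 / 4) ^ 2 * shrinkerFactor lam B p + -8 * lam * (p.2 - B) ^ 2 * (p.2 + B))
        / (48 * p.2) := by
  rw [shrinkerLyapunovRate]
  congr 2
  linear_combination (p.2 - B) * hB2

theorem shrinkerLyapunovRate_nonneg {lam B : ℝ} {p : ℝ × ℝ} (hB : 0 < B)
    (hB2 : -8 * lam * B ^ 2 = 9) (hy : 0 < p.2) (hx : -1 ≤ p.1) (hreg : 4 / 5 < -lam * p.2 ^ 2) :
    0 ≤ shrinkerLyapunovRate lam B p := by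
  have hS := shrinkerFactor_pos hB hB2 hx hreg
  have hlam : 0 < -8 * lam := by nlinarith
  have hyB : 0 < p.2 + B := by linarith
  rw [shrinkerLyapunovRate_eq hB2]
  positivity

theorem eq_of_shrinkerLyapunovRate_eq_zero {lam B : ℝ} {p : ℝ × ℝ} (hB : 0 < B)
    (hB2 : -8 * lam * B ^ 2 = 9) (hy : 0 < p.2) (hx : -1 ≤ p.1) (hreg : 4 / 5 < -lam * p.2 ^ 2)
    (h : shrinkerLyapunovRate lam B p = 0) : p = (-3 / 4, B) := by
  have hS := shrinkerFactor_pos hB hB2 hx hreg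
  have hlam : 0 < -8 * lam := by nlinarith
  have hyB : 0 < p.2 + B := by linarith
  rw [shrinkerLyapunovRate_eq hB2, div_eq_zero_iff, or_iff_left (by positivity),
    add_eq_zero_iff_of_nonneg (by positivity) (by positivity)] at h
  simp only [mul_eq_zero, pow_eq_zero_iff two_ne_zero, hS.ne', hlam.ne', hyB.ne',
    OfNat.ofNat_ne_zero, false_or, or_false] at h
  exact Prod.ext (by linarith) (by linarith)

theorem stmt17_general (lam : ℝ) :
    (∀ a b : ℝ, 0 < b →
      deriv (fun a' => -2 * lam * b * (a' + 2 / 3) + a' * (1 + 2 * a') / (2 * b)) a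
          + deriv (fun _b' => (2 * (a + 3 / 4) : ℝ)) b
        = (1 + 4 * a - 4 * lam * b ^ 2) / (2 * b)) ∧
    (∀ a b : ℝ, 0 < b → -1 ≤ a → 4 / 5 < -lam * b ^ 2 →
      0 < (1 + 4 * a - 4 * lam * b ^ 2) / (2 * b)) ∧
    (∀ U : Set (ℝ × ℝ), IsOpen U → SimplyConnectedSpace U →
      (∀ p ∈ U, 0 < p.2 ∧ -1 ≤ p.1 ∧ 4 / 5 < -lam * p.2 ^ 2) →
      ∀ γ : ℝ → ℝ × ℝ, (∀ t, γ t ∈ U) →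
      (∀ t, HasDerivAt γ
        (-2 * lam * (γ t).2 * ((γ t).1 + 2 / 3)
            + (γ t).1 * (1 + 2 * (γ t).1) / (2 * (γ t).2),
         2 * ((γ t).1 + 3 / 4)) t) →
      ∀ T : ℝ, 0 < T → Function.Periodic γ T →
      ∀ s t : ℝ, γ s = γ t) := by
  refine ⟨shrinkerField_divergence lam, shrinkerField_divergence_pos lam,
    fun U _ _ hU γ hγU hγ T hT hper s t => ?_⟩
  have hreg (u : ℝ) := hU _ (hγU u)
  have hlam : lam < 0 := by nlinarith [(hreg 0).2.2, sq_nonneg (γ 0).2]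
  obtain ⟨B, hB, hB2⟩ : ∃ B : ℝ, 0 < B ∧ -8 * lam * B ^ 2 = 9 := by
    refine ⟨√(-9 / (8 * lam)), sqrt_pos.mpr (div_pos_of_neg_of_neg (by norm_num) (by linarith)), ?_⟩
    rw [sq_sqrt (div_nonneg_of_nonpos (by norm_num) (by linarith))]
    field_simp [hlam.ne]
  have hrate (u : ℝ) : shrinkerLyapunovRate lam B (γ u) = 0 :=
    (hper.comp (shrinkerLyapunov lam B)).hasDerivAt_eq_zero_of_nonneg hT
      (fun u => hasDerivAt_shrinkerLyapunov_comp lam B (hreg u).1.ne' (hγ u))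
      (fun u => shrinkerLyapunovRate_nonneg hB hB2 (hreg u).1 (hreg u).2.1 (hreg u).2.2) u
  have hrest (u : ℝ) : γ u = (-3 / 4, B) :=
    eq_of_shrinkerLyapunovRate_eq_zero hB hB2 (hreg u).1 (hreg u).2.1 (hreg u).2.2 (hrate u)
  rw [hrest s, hrest t]

theorem stmt17 (lam : ℝ) (hlam : lam < 0) :
    (∀ a b : ℝ, 0 < b →
      deriv (fun a' => -2 * lam * b * (a' + 2 / 3) + a' * (1 + 2 * a') / (2 * b)) a
          + deriv (fun _b' => (2 * (a + 3 / 4) : ℝ)) b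
        = (1 + 4 * a - 4 * lam * b ^ 2) / (2 * b)) ∧
    (∀ a b : ℝ, 0 < b → -1 ≤ a → 4 / 5 < -lam * b ^ 2 →
      0 < (1 + 4 * a - 4 * lam * b ^ 2) / (2 * b)) ∧
    (∀ U : Set (ℝ × ℝ), IsOpen U → SimplyConnectedSpace U →
      (∀ p ∈ U, 0 < p.2 ∧ -1 ≤ p.1 ∧ 4 / 5 < -lam * p.2 ^ 2) →
      ∀ γ : ℝ → ℝ × ℝ, (∀ t, γ t ∈ U) →
      (∀ t, HasDerivAt γ
        (-2 * lam * (γ t).2 * ((γ t).1 + 2 / 3)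
            + (γ t).1 * (1 + 2 * (γ t).1) / (2 * (γ t).2),
         2 * ((γ t).1 + 3 / 4)) t) →
      ∀ T : ℝ, 0 < T → Function.Periodic γ T →
      ∀ s t : ℝ, γ s = γ t) :=
  stmt17_general lam
end

section
/- Let ν > 1, a ∈ ℝ, and suppose f : [t₀, ∞) → ℝ is differentiable with t^ν f'(t) → a as t → ∞. Then f has a finite limit f_∞ at infinity, and t^{ν−1}(f(t) − f_∞) → a/(1 − ν) as t → ∞. -/
/-! Since `t ^ ν * f' t` is bounded, `f' = O(t ^ (-ν))` is integrable at infinity (`ν > 1`), so `f`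
converges to some `L`; the rate is l'Hôpital's rule for `(f t - L) / t ^ (1 - ν)`, both terms
tending to `0`, with derivative quotient `f' t / ((1 - ν) * t ^ (-ν)) → a / (1 - ν)`. -/

open Filter Asymptotics MeasureTheory Topology

lemma isBigO_rpow_neg_of_tendsto_rpow_mul {ν a : ℝ} {g : ℝ → ℝ}
    (h : Tendsto (fun t => t ^ ν * g t) atTop (𝓝 a)) :
    g =O[atTop] fun t => t ^ (-ν) := by
  have hprod := (h.isBigO_one ℝ).mul (isBigO_refl (fun t : ℝ => t ^ (-ν)) atTop)
  simp only [one_mul] at hprod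
  refine hprod.congr' ?_ EventuallyEq.rfl
  filter_upwards [eventually_gt_atTop 0] with t ht
  rw [mul_right_comm, ← Real.rpow_add ht, add_neg_cancel, Real.rpow_zero, one_mul]

lemma exists_tendsto_atTop_of_integrableAtFilter_deriv {f : ℝ → ℝ}
    (hf : ∀ᶠ t in atTop, DifferentiableAt ℝ f t) (hint : IntegrableAtFilter (deriv f) atTop) :
    ∃ L, Tendsto f atTop (𝓝 L) := by
  obtain ⟨s, hs, hint⟩ := hint
  obtain ⟨T, hT⟩ := (hf.and hs).exists_forall_of_atTop
  exact ⟨_, tendsto_limUnder_of_hasDerivAt_of_integrableOn_Ioi (a := T)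
    (fun t ht => (hT t ht.le).1.hasDerivAt) (hint.mono_set fun t ht => (hT t ht.le).2)⟩

lemma tendsto_rpow_sub_one_mul_sub_of_tendsto_rpow_mul_deriv {ν a L : ℝ} (hν : 1 < ν)
    {f f' : ℝ → ℝ} (hf : ∀ᶠ t in atTop, HasDerivAt f (f' t) t) (hL : Tendsto f atTop (𝓝 L))
    (h : Tendsto (fun t => t ^ ν * f' t) atTop (𝓝 a)) :
    Tendsto (fun t => t ^ (ν - 1) * (f t - L)) atTop (𝓝 (a / (1 - ν))) := by
  have hden : ∀ t : ℝ, 0 < t → HasDerivAt (fun t => t ^ (1 - ν)) ((1 - ν) * t ^ (-ν)) t := by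
    intro t ht
    simpa using Real.hasDerivAt_rpow_const (p := 1 - ν) (Or.inl ht.ne')
  have hquot : Tendsto (fun t => (f t - L) / t ^ (1 - ν)) atTop (𝓝 (a / (1 - ν))) := by
    refine HasDerivAt.lhopital_zero_atTop (hf.mono fun t ht => ht.sub_const L)
      ((eventually_gt_atTop 0).mono hden) ?_ ?_ ?_ ?_
    · filter_upwards [eventually_gt_atTop 0] with t ht
      exact mul_ne_zero (by linarith) (Real.rpow_pos_of_pos ht _).ne'
    · simpa using hL.sub_const L
    · simpa [neg_sub] using tendsto_rpow_neg_atTop (show 0 < ν - 1 by linarith)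
    · refine (h.div_const (1 - ν)).congr' ?_
      filter_upwards [eventually_gt_atTop 0] with t ht
      rw [Real.rpow_neg ht.le]
      field_simp
  refine hquot.congr' ?_
  filter_upwards [eventually_gt_atTop 0] with t ht
  rw [div_eq_mul_inv, ← Real.rpow_neg ht.le, neg_sub, mul_comm]

theorem stmt18 (ν a t₀ : ℝ) (hν : 1 < ν) (f : ℝ → ℝ)
    (hf : ∀ t ∈ Set.Ici t₀, DifferentiableAt ℝ f t)
    (h : Tendsto (fun t => t ^ ν * deriv f t) atTop (nhds a)) :
    ∃ L : ℝ, Tendsto f atTop (nhds L) ∧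
      Tendsto (fun t => t ^ (ν - 1) * (f t - L)) atTop (nhds (a / (1 - ν))) := by
  have hf' : ∀ᶠ t in atTop, DifferentiableAt ℝ f t := (eventually_ge_atTop t₀).mono hf
  obtain ⟨L, hL⟩ := exists_tendsto_atTop_of_integrableAtFilter_deriv hf' <|
    (isBigO_rpow_neg_of_tendsto_rpow_mul h).integrableAtFilter
      (measurable_deriv f).stronglyMeasurable.stronglyMeasurableAtFilter
      (integrableAtFilter_rpow_atTop_iff.mpr (by linarith))
  exact ⟨L, hL, tendsto_rpow_sub_one_mul_sub_of_tendsto_rpow_mul_deriv hν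
    (hf'.mono fun t ht => ht.hasDerivAt) hL h⟩
end

section
/- Suppose x(t) = c₁t + o(t), y(t) = c₂t + o(t), and S(t) → S* as t → ∞, where x, y, S satisfy x' = 1/3 + x²/(6y²) + 2S/(3y²) and (x/y)' = S/y³, with c₁, c₂ > 0. Then x/y = (c₁/c₂)(1 − (S*/(2c₁c₂²))t⁻² + o(t⁻²)), and x'(t) = c₁ − ξS*t⁻² + o(t⁻²) with ξ = (c₁² − 4c₂²)/(18c₁c₂⁴); hence, after a translation in t, x(t) = c₁t + ξS*t⁻¹ + o(t⁻¹). -/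
/-!
Asymptotic integration: if `t ^ ν * f' t → a` with `ν > 1`, then `f` has a limit `L` and
`t ^ (ν - 1) * (f t - L) → a / (1 - ν)`; this follows by comparing `f - a t^(1-ν)/(1-ν)`, whose
derivative is `o(t^(-ν))`, with the antiderivative of `ε t^(-ν)`.

Applied with `ν = 3` to `(x/y)' = S/y³ ~ S*/(c₂ t)³`, using `x/y → c₁/c₂`, it gives the rate of
`x/y`. Since `x' → 1/3 + (c₁/c₂)²/6` and `x/t → c₁`, these limits agree, and this relation turns
`x' - c₁` into `((x/y)² - (c₁/c₂)²)/6 + 2S/(3y²) = O(t⁻²)`, whose rate follows from the first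
one. Integrating once more with `ν = 2` gives the expansion of `x`.
-/

open Filter Topology Asymptotics

theorem abs_sub_le_sub_of_abs_deriv_le {f f' g g' : ℝ → ℝ} {a b : ℝ} (hab : a ≤ b)
    (hf : ∀ t ∈ Set.Icc a b, HasDerivAt f (f' t) t)
    (hg : ∀ t ∈ Set.Icc a b, HasDerivAt g (g' t) t)
    (hle : ∀ t ∈ Set.Ico a b, |f' t| ≤ g' t) : |f b - f a| ≤ g b - g a :=
  image_norm_le_of_norm_deriv_right_le_deriv_boundary' (f := fun t => f t - f a)
    (B := fun t => g t - g a)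
    (fun t ht => ((hf t ht).continuousAt.sub continuousAt_const).continuousWithinAt)
    (fun t ht => ((hf t (Set.Ico_subset_Icc_self ht)).sub_const (f a)).hasDerivWithinAt)
    (by simp)
    (fun t ht => ((hg t ht).continuousAt.sub continuousAt_const).continuousWithinAt)
    (fun t ht => ((hg t (Set.Ico_subset_Icc_self ht)).sub_const (g a)).hasDerivWithinAt)
    hle ⟨hab, le_rfl⟩

theorem tendsto_div_of_tendsto_deriv {f f' : ℝ → ℝ} {L : ℝ}
    (hf : ∀ᶠ t in atTop, HasDerivAt f (f' t) t) (hf' : Tendsto f' atTop (𝓝 L)) :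
    Tendsto (fun t => f t / t) atTop (𝓝 L) := by
  have hlin : (fun t => f t - L * t) =o[atTop] id := by
    refine isLittleO_iff.2 fun c hc => ?_
    obtain ⟨T, hT⟩ := eventually_atTop.1 <| (hf.and (eventually_ge_atTop 0)).and
      (hf'.eventually (Metric.closedBall_mem_nhds L (half_pos hc)))
    filter_upwards [eventually_ge_atTop T, eventually_ge_atTop (2 * |f T - L * T| / c)]
      with t hTt ht
    obtain ⟨⟨-, hT0⟩, -⟩ := hT T le_rfl
    have hincr : |(f t - L * t) - (f T - L * T)| ≤ c / 2 * t - c / 2 * T :=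
      abs_sub_le_sub_of_abs_deriv_le hTt
        (fun u hu => ((hT u hu.1).1.1).sub ((hasDerivAt_id u).const_mul L))
        (fun u _ => by simpa using (hasDerivAt_id u).const_mul (c / 2))
        (fun u hu => by simpa [Real.dist_eq] using (hT u hu.1).2)
    have hfT : 2 * |f T - L * T| ≤ c * t := by rwa [div_le_iff₀' hc] at ht
    rw [Real.norm_eq_abs, Real.norm_eq_abs, id, abs_of_nonneg (hT0.trans hTt)]
    have htri := abs_sub_abs_le_abs_sub (f t - L * t) (f T - L * T)
    nlinarith
  have hdiv := hlin.tendsto_div_nhds_zero.add_const L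
  rw [zero_add] at hdiv
  refine hdiv.congr' ?_
  filter_upwards [eventually_ne_atTop 0] with t ht
  simp only [id]
  field_simp
  ring

theorem abs_sub_le_of_abs_deriv_le_rpow {h h' : ℝ → ℝ} {ν c s t : ℝ} (hν : 1 < ν)
    (hs : 0 < s) (hst : s ≤ t) (hh : ∀ u ∈ Set.Icc s t, HasDerivAt h (h' u) u)
    (hbound : ∀ u ∈ Set.Ico s t, |h' u| ≤ c * u ^ (-ν)) :
    |h t - h s| ≤ c / (ν - 1) * (s ^ (1 - ν) - t ^ (1 - ν)) := by
  have hG : ∀ u ∈ Set.Icc s t,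
      HasDerivAt (fun u => -(c / (ν - 1)) * u ^ (1 - ν)) (c * u ^ (-ν)) u := by
    intro u hu
    refine ((Real.hasDerivAt_rpow_const (p := 1 - ν)
      (Or.inl (hs.trans_le hu.1).ne')).const_mul (-(c / (ν - 1)))).congr_deriv ?_
    rw [show 1 - ν - 1 = -ν by ring]
    field_simp [(sub_pos.2 hν).ne']
    ring
  linarith [abs_sub_le_sub_of_abs_deriv_le hst hh hG hbound]

theorem exists_tendsto_and_sub_isLittleO_rpow_of_deriv_isLittleO {h h' : ℝ → ℝ} {ν : ℝ}
    (hν : 1 < ν) (hh : ∀ᶠ t in atTop, HasDerivAt h (h' t) t)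
    (hh' : h' =o[atTop] fun t => t ^ (-ν)) :
    ∃ L, Tendsto h atTop (𝓝 L) ∧ (fun t => h t - L) =o[atTop] fun t => t ^ (1 - ν) := by
  have hclose : ∀ c > 0, ∀ᶠ s in atTop, ∀ t ≥ s, |h t - h s| ≤ c * s ^ (1 - ν) := by
    intro c hc
    have hcν : 0 < c * (ν - 1) := mul_pos hc (sub_pos.2 hν)
    obtain ⟨T, hT⟩ := eventually_atTop.1 <|
      (hh.and (isLittleO_iff.1 hh' hcν)).and (eventually_gt_atTop 0)
    filter_upwards [eventually_ge_atTop T] with s hs t hst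
    have hs0 := (hT s hs).2
    have hincr := abs_sub_le_of_abs_deriv_le_rpow (c := c * (ν - 1)) hν hs0 hst
      (fun u hu => (hT u (hs.trans hu.1)).1.1) (fun u hu => ?_)
    · rw [mul_div_cancel_right₀ _ (sub_pos.2 hν).ne'] at hincr
      nlinarith [Real.rpow_pos_of_pos (hs0.trans_le hst) (1 - ν)]
    · have hu := hT u (hs.trans hu.1)
      simpa [Real.norm_eq_abs, abs_of_pos (Real.rpow_pos_of_pos hu.2 _)] using hu.1.2
  obtain ⟨L, hL⟩ : ∃ L, Tendsto h atTop (𝓝 L) := by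
    refine cauchySeq_tendsto_of_complete (Metric.cauchySeq_iff'.2 fun ε hε => ?_)
    obtain ⟨N, hN⟩ := eventually_atTop.1 <|
      (hclose (ε / 2) (half_pos hε)).and (eventually_ge_atTop 1)
    refine ⟨N, fun t ht => ?_⟩
    have hpow : N ^ (1 - ν) ≤ 1 :=
      Real.rpow_le_one_of_one_le_of_nonpos (hN N le_rfl).2 (by linarith)
    rw [Real.dist_eq]
    nlinarith [(hN N le_rfl).1 t ht]
  refine ⟨L, hL, isLittleO_iff.2 fun c hc => ?_⟩
  filter_upwards [hclose c hc, eventually_gt_atTop 0] with s hs hs0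
  rw [Real.norm_eq_abs, Real.norm_eq_abs, abs_of_pos (Real.rpow_pos_of_pos hs0 _), abs_sub_comm]
  exact le_of_tendsto ((hL.sub_const (h s)).abs)
    ((eventually_ge_atTop s).mono hs)

theorem exists_tendsto_rpow_mul_sub_of_tendsto_rpow_mul_deriv {f f' : ℝ → ℝ} {ν a : ℝ}
    (hν : 1 < ν) (hf : ∀ᶠ t in atTop, HasDerivAt f (f' t) t)
    (hlim : Tendsto (fun t => t ^ ν * f' t) atTop (𝓝 a)) :
    ∃ L, Tendsto f atTop (𝓝 L) ∧
      Tendsto (fun t => t ^ (ν - 1) * (f t - L)) atTop (𝓝 (a / (1 - ν))) := by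
  have hν' : 1 - ν ≠ 0 := (sub_neg.2 hν).ne
  set φ : ℝ → ℝ := fun t => t ^ (1 - ν) / (1 - ν)
  have hφ : Tendsto φ atTop (𝓝 0) := by
    simpa [φ, neg_sub] using (tendsto_rpow_neg_atTop (sub_pos.2 hν)).div_const (1 - ν)
  have hrem : ∀ᶠ t in atTop,
      HasDerivAt (fun t => f t - a * φ t) (f' t - a * t ^ (-ν)) t := by
    filter_upwards [hf, eventually_gt_atTop 0] with t hft ht
    refine hft.sub (((Real.hasDerivAt_rpow_const (Or.inl ht.ne')).div_const _).const_mul a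
      |>.congr_deriv ?_)
    rw [sub_sub_cancel_left]
    field_simp
  have hrem' : (fun t => f' t - a * t ^ (-ν)) =o[atTop] fun t => t ^ (-ν) := by
    refine (isLittleO_iff_tendsto' ?_).2 ?_
    · filter_upwards [eventually_gt_atTop 0] with t ht h0
      exact absurd h0 (Real.rpow_pos_of_pos ht _).ne'
    · refine (tendsto_sub_nhds_zero_iff.2 hlim).congr' ?_
      filter_upwards [eventually_gt_atTop 0] with t ht
      rw [Real.rpow_neg ht.le]
      field_simp
  obtain ⟨L, hL, hLo⟩ := exists_tendsto_and_sub_isLittleO_rpow_of_deriv_isLittleO hν hrem hrem'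
  refine ⟨L, by simpa using hL.add (hφ.const_mul a), ?_⟩
  have hdiv := hLo.tendsto_div_nhds_zero.add_const (a / (1 - ν))
  rw [zero_add] at hdiv
  refine hdiv.congr' ?_
  filter_upwards [eventually_gt_atTop 0] with t ht
  have hinv : t ^ (1 - ν) = (t ^ (ν - 1))⁻¹ := by rw [← Real.rpow_neg ht.le, neg_sub]
  simp only [φ, hinv]
  field_simp
  ring

theorem exists_tendsto_pow_mul_sub_of_tendsto_pow_mul_deriv {f f' : ℝ → ℝ} {n : ℕ} {a : ℝ}
    (hn : 1 < n) (hf : ∀ᶠ t in atTop, HasDerivAt f (f' t) t)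
    (hlim : Tendsto (fun t => t ^ n * f' t) atTop (𝓝 a)) :
    ∃ L, Tendsto f atTop (𝓝 L) ∧
      Tendsto (fun t => t ^ (n - 1) * (f t - L)) atTop (𝓝 (a / (1 - n))) := by
  have hcast : ((n - 1 : ℕ) : ℝ) = n - 1 := by rw [Nat.cast_sub (by omega), Nat.cast_one]
  simp only [← Real.rpow_natCast, hcast] at hlim ⊢
  exact exists_tendsto_rpow_mul_sub_of_tendsto_rpow_mul_deriv (by exact_mod_cast hn) hf hlim

theorem tendsto_div_of_tendsto_div_id {x y : ℝ → ℝ} {a b : ℝ}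
    (hx : Tendsto (fun t => x t / t) atTop (𝓝 a)) (hy : Tendsto (fun t => y t / t) atTop (𝓝 b))
    (hb : b ≠ 0) : Tendsto (fun t => x t / y t) atTop (𝓝 (a / b)) :=
  (hx.div hy hb).congr' <| (eventually_ne_atTop 0).mono fun _ ht =>
    div_div_div_cancel_right₀ ht _ _

noncomputable def closureRHS (x y S : ℝ → ℝ) (t : ℝ) : ℝ :=
  1 / 3 + x t ^ 2 / (6 * y t ^ 2) + 2 * S t / (3 * y t ^ 2)

section SolitonEnd

variable {x y S : ℝ → ℝ} {c₁ c₂ Sstar : ℝ}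

theorem tendsto_closureRHS (hxy : Tendsto (fun t => x t / y t) atTop (𝓝 (c₁ / c₂)))
    (hty : Tendsto (fun t => t / y t) atTop (𝓝 c₂⁻¹)) (hS : Tendsto S atTop (𝓝 Sstar)) :
    Tendsto (closureRHS x y S) atTop (𝓝 (1 / 3 + (c₁ / c₂) ^ 2 / 6)) := by
  have hsmall : Tendsto (fun t => 2 / 3 * S t * (t / y t) ^ 2 * (t⁻¹) ^ 2) atTop (𝓝 0) := by
    simpa using ((hS.const_mul (2 / 3)).mul (hty.pow 2)).mul (tendsto_inv_atTop_zero.pow 2)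
  have hsum := (tendsto_const_nhds (x := 1 / 3)).add ((hxy.pow 2).div_const 6) |>.add hsmall
  rw [add_zero] at hsum
  refine hsum.congr' ?_
  filter_upwards [eventually_ne_atTop 0] with t ht
  simp only [closureRHS]
  field_simp

theorem tendsto_sq_mul_ratio_sub (hc₁ : c₁ ≠ 0) (hc₂ : c₂ ≠ 0)
    (hxy : Tendsto (fun t => x t / y t) atTop (𝓝 (c₁ / c₂)))
    (hty : Tendsto (fun t => t / y t) atTop (𝓝 c₂⁻¹)) (hS : Tendsto S atTop (𝓝 Sstar))
    (hdxy : ∀ᶠ t in atTop, HasDerivAt (fun s => x s / y s) (S t / y t ^ 3) t) :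
    Tendsto (fun t => t ^ 2 * (x t / y t - c₁ / c₂)) atTop
      (𝓝 (-(c₁ / c₂ * (Sstar / (2 * c₁ * c₂ ^ 2))))) := by
  have hlim : Tendsto (fun t => t ^ 3 * (S t / y t ^ 3)) atTop (𝓝 (Sstar * c₂⁻¹ ^ 3)) :=
    (hS.mul (hty.pow 3)).congr fun t => by ring
  obtain ⟨L, hL, hrate⟩ :=
    exists_tendsto_pow_mul_sub_of_tendsto_pow_mul_deriv (by norm_num) hdxy hlim
  obtain rfl := tendsto_nhds_unique hL hxy
  convert hrate using 2
  field_simp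
  norm_num

theorem tendsto_sq_mul_closureRHS_sub (hc₁ : c₁ ≠ 0) (hc₂ : c₂ ≠ 0)
    (hrel : c₁ = 1 / 3 + (c₁ / c₂) ^ 2 / 6)
    (hxy : Tendsto (fun t => x t / y t) atTop (𝓝 (c₁ / c₂)))
    (hty : Tendsto (fun t => t / y t) atTop (𝓝 c₂⁻¹)) (hS : Tendsto S atTop (𝓝 Sstar))
    (hratio : Tendsto (fun t => t ^ 2 * (x t / y t - c₁ / c₂)) atTop
      (𝓝 (-(c₁ / c₂ * (Sstar / (2 * c₁ * c₂ ^ 2)))))) :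
    Tendsto (fun t => t ^ 2 * (closureRHS x y S t - c₁)) atTop
      (𝓝 (-((c₁ ^ 2 - 4 * c₂ ^ 2) / (18 * c₁ * c₂ ^ 4) * Sstar))) := by
  have hlim := (hratio.mul ((hxy.add_const (c₁ / c₂)).div_const 6)).add
    ((hS.mul (hty.pow 2)).const_mul (2 / 3))
  convert hlim using 2 with t
  · rw [closureRHS]
    linear_combination (-t ^ 2) * hrel
  · have hpoly : c₁ ^ 2 = 6 * c₁ * c₂ ^ 2 - 2 * c₂ ^ 2 := by
      field_simp at hrel
      linear_combination (-1 / 3 : ℝ) * hrel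
    field_simp
    linear_combination 72 * Sstar * hpoly

end SolitonEnd

theorem stmt19 (c₁ c₂ Sstar t₀ : ℝ) (hc₁ : 0 < c₁) (hc₂ : 0 < c₂)
    (x y S : ℝ → ℝ)
    (hxlim : Tendsto (fun t => x t / t) atTop (nhds c₁))
    (hylim : Tendsto (fun t => y t / t) atTop (nhds c₂))
    (hSlim : Tendsto S atTop (nhds Sstar))
    (hdx : ∀ t ∈ Set.Ici t₀, HasDerivAt x
      (1 / 3 + x t ^ 2 / (6 * y t ^ 2) + 2 * S t / (3 * y t ^ 2)) t)
    (hdxy : ∀ t ∈ Set.Ici t₀, HasDerivAt (fun s => x s / y s)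
      (S t / y t ^ 3) t) :
    Tendsto (fun t => t ^ 2 * (x t / y t - c₁ / c₂)) atTop
      (nhds (-(c₁ / c₂ * (Sstar / (2 * c₁ * c₂ ^ 2))))) ∧
    Tendsto (fun t => t ^ 2 * (deriv x t - c₁)) atTop
      (nhds (-((c₁ ^ 2 - 4 * c₂ ^ 2) / (18 * c₁ * c₂ ^ 4) * Sstar))) ∧
    ∃ k : ℝ, Tendsto
      (fun t => t * (x t - (c₁ * t + k
        + (c₁ ^ 2 - 4 * c₂ ^ 2) / (18 * c₁ * c₂ ^ 4) * Sstar * t⁻¹)))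
      atTop (nhds 0) := by
  have hdx' : ∀ᶠ t in atTop, HasDerivAt x (closureRHS x y S t) t :=
    (eventually_ge_atTop t₀).mono hdx
  have hxy := tendsto_div_of_tendsto_div_id hxlim hylim hc₂.ne'
  have hty : Tendsto (fun t => t / y t) atTop (𝓝 c₂⁻¹) :=
    (hylim.inv₀ hc₂.ne').congr fun t => inv_div _ _
  have hrel : c₁ = 1 / 3 + (c₁ / c₂) ^ 2 / 6 :=
    tendsto_nhds_unique hxlim (tendsto_div_of_tendsto_deriv hdx' (tendsto_closureRHS hxy hty hSlim))
  have hratio := tendsto_sq_mul_ratio_sub hc₁.ne' hc₂.ne' hxy hty hSlim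
    ((eventually_ge_atTop t₀).mono hdxy)
  have hrate := tendsto_sq_mul_closureRHS_sub hc₁.ne' hc₂.ne' hrel hxy hty hSlim hratio
  refine ⟨hratio, hrate.congr' <| hdx'.mono fun t ht => by simp only [ht.deriv], ?_⟩
  obtain ⟨k, -, hk⟩ := exists_tendsto_pow_mul_sub_of_tendsto_pow_mul_deriv one_lt_two
    (hdx'.mono fun t ht => ht.sub ((hasDerivAt_id t).const_mul c₁)) (by simpa using hrate)
  refine ⟨k, (tendsto_sub_nhds_zero_iff.2 hk).congr' ?_⟩
  filter_upwards [eventually_ne_atTop 0] with t ht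
  norm_num
  field_simp
  ring
end
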